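/- Suppose that every h ∈ H acts trivially on V / V^{ab,S}, i.e. h·v − v ∈ V^{ab,S} for all h ∈ H and v ∈ V. Then for all G×S-stable subspaces V'' ⊆ V' ⊆ V, setting W = V'/V'', every h ∈ H acts trivially on W / W^{ab,S}, i.e. h·w − w ∈ W^{ab,S} for all h ∈ H and w ∈ W. (Lemma 2.11 of the paper, stated abstractly.) -/
import Mathlib


/-- Lemma 2.11 of the paper, stated abstractly.
`G` and `S` are groups, `H` a normal subgroup of `G` with `G/H` abelian,
`ι : S → G/H` a homomorphism, and `V` a `k`-vector space with commuting
`k`-linear actions of `G` and `S`.  If every `h ∈ H` acts trivially on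
`V / V^{ab,S}`, then for every subquotient `W = V'/V''` by `G×S`-stable
subspaces, every `h ∈ H` acts trivially on `W / W^{ab,S}`. -/
theorem statement_5 {k G S V : Type*} [Field k] [AddCommGroup V] [Module k V]
    [Group G] [Group S] (H : Subgroup G) [H.Normal]
    (hab : ∀ a b : G ⧸ H, a * b = b * a) (ι : S →* G ⧸ H)
    (ρ : Representation k G V) (σ : Representation k S V)
    (hcomm : ∀ (g : G) (s : S) (v : V), ρ g (σ s v) = σ s (ρ g v))
    -- every `h ∈ H` acts trivially on `V / V^{ab,S}`:
    (htriv : ∀ h ∈ H, ∀ v : V,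
      (∀ h' ∈ H, ρ h' (ρ h v - v) = ρ h v - v) ∧
      (∀ (s : S) (g : G), QuotientGroup.mk g = ι s →
        ρ g (ρ h v - v) = σ s (ρ h v - v)))
    -- `G×S`-stable subspaces `V'' ⊆ V' ⊆ V`:
    (V' V'' : Submodule k V) (h12 : V'' ≤ V')
    (hV'G : ∀ (g : G), ∀ v ∈ V', ρ g v ∈ V')
    (hV'S : ∀ (s : S), ∀ v ∈ V', σ s v ∈ V')
    (hV''G : ∀ (g : G), ∀ v ∈ V'', ρ g v ∈ V'')
    (hV''S : ∀ (s : S), ∀ v ∈ V'', σ s v ∈ V'') :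
    -- in `W = V'/V''`, for every `h ∈ H` and `w ∈ W`, `h·w − w ∈ W^{ab,S}`
    ∀ h ∈ H, ∀ w ∈ V', ∃ a ∈ V',
      (∀ h' ∈ H, ρ h' a - a ∈ V'') ∧
      (∀ (s : S) (g : G), QuotientGroup.mk g = ι s → ρ g a - σ s a ∈ V'') ∧
      ρ h w - w - a ∈ V'' := by
  intro h hH w hw
  refine ⟨ρ h w - w, Submodule.sub_mem _ (hV'G h w hw) hw, ?_, ?_, by simp⟩
  · intro h' hh'
    rw [(htriv h hH w).1 h' hh']
    simp
  · intro s g hgs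
    rw [(htriv h hH w).2 s g hgs]
    simp
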